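/- arXiv:2411.03400 — 4 statements merged into one kernel-verified Lean document; each statement's English description precedes it below -/
import Mathlib

section
/- Let Σ be a bipartite graph with bipartition U ∪ W such that every u ∈ U has at least x neighbours and every w ∈ W has at most y neighbours. Then there exists W' ⊆ W covering U (i.e. every u ∈ U has a neighbour in W') with |W'| ≤ (|W|/x)·(1 + ln y). -/
/-!
Greedy covering. Put `a = |W| / x`. Double counting shows that every nonempty `A ⊆ U` has some
`w` adjacent to at least `|A| / a` of its vertices; take it and recurse on the rest of `A`.
Then `t` vertices are covered by at most `coverBound a t` elements of `W`: this function is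
concave with slope `min 1 (a / t)`, so removing `max 1 (t / a)` vertices lowers it by at least `1`.
Double counting again gives `|U| / a ≤ y`.
-/

open Finset Real

noncomputable def coverBound (a t : ℝ) : ℝ :=
  if t ≤ a then t else a * (1 + log (t / a))

lemma mul_min_le_coverBound_sub {a s t : ℝ} (ha : 0 < a) (hst : s ≤ t) :
    (t - s) * min 1 (a / t) ≤ coverBound a t - coverBound a s := by
  unfold coverBound
  split_ifs with ht hs hs
  · nlinarith [min_le_left 1 (a / t)]
  · linarith
  · have ht0 : 0 < t := by linarith
    have hlog : 1 - a / t ≤ log (t / a) := by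
      simpa using one_sub_inv_le_log_of_pos (div_pos ht0 ha)
    have hnonneg : 0 ≤ (a - s) * (1 - a / t) :=
      mul_nonneg (by linarith) (by rw [sub_nonneg, div_le_one ht0]; linarith)
    have hmin : min 1 (a / t) = a / t := min_eq_right ((div_le_one ht0).2 (by linarith))
    calc (t - s) * min 1 (a / t) = a - s + a * (1 - a / t) - (a - s) * (1 - a / t) := by
          rw [hmin]; field_simp; ring
      _ ≤ a - s + a * log (t / a) := by nlinarith [mul_le_mul_of_nonneg_left hlog ha.le]
      _ = _ := by ring
  · have hs0 : 0 < s := by linarith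
    have ht0 : 0 < t := by linarith
    have hlog : 1 - s / t ≤ log (t / s) := by
      simpa using one_sub_inv_le_log_of_pos (div_pos ht0 hs0)
    have hmin : min 1 (a / t) = a / t := min_eq_right ((div_le_one ht0).2 (by linarith))
    have hquot : log (t / a) - log (s / a) = log (t / s) := by
      rw [← log_div (by positivity) (by positivity), div_div_div_cancel_right₀ ha.ne']
    calc (t - s) * min 1 (a / t) = a * (1 - s / t) := by rw [hmin]; field_simp
      _ ≤ a * log (t / s) := by gcongr
      _ = _ := by rw [← hquot]; ring

lemma coverBound_add_one_le {a s t : ℝ} (ha : 0 < a) (hs : 0 ≤ s) (hst₁ : s ≤ t - 1)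
    (hst₂ : s ≤ t - t / a) : coverBound a s + 1 ≤ coverBound a t := by
  have ht : 0 < t := by linarith
  suffices 1 ≤ (t - s) * min 1 (a / t) by
    linarith [mul_min_le_coverBound_sub ha (by linarith : s ≤ t)]
  rcases le_total 1 (a / t) with h | h
  · rw [min_eq_left h]; linarith
  · rw [min_eq_right h]
    calc (1 : ℝ) = t / a * (a / t) := by field_simp
      _ ≤ (t - s) * (a / t) := by gcongr; linarith

lemma coverBound_zero {a : ℝ} (ha : 0 ≤ a) : coverBound a 0 = 0 := if_pos ha

lemma coverBound_le {a t y : ℝ} (ha : 0 < a) (hy : 0 ≤ log y) (hty : t / a ≤ y) :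
    coverBound a t ≤ a * (1 + log y) := by
  unfold coverBound
  split_ifs with ht
  · nlinarith
  · have : 0 < t / a := div_pos (by linarith) ha
    gcongr

section Cover

variable {U W : Type*} (E : U → W → Prop) [∀ u w, Decidable (E u w)]

theorem exists_cover_card_le_coverBound {a : ℝ} (ha : 0 < a)
    (hgood : ∀ A : Finset U, A.Nonempty → ∃ w, (#A : ℝ) ≤ a * #(A.bipartiteBelow E w))
    (A : Finset U) :
    ∃ S : Finset W, (∀ u ∈ A, ∃ w ∈ S, E u w) ∧ (#S : ℝ) ≤ coverBound a #A := by
  classical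
  induction A using Finset.strongInduction with
  | H A ih =>
  obtain rfl | hA := A.eq_empty_or_nonempty
  · exact ⟨∅, by simp, by simp [coverBound_zero ha.le]⟩
  obtain ⟨w, hw⟩ := hgood A hA
  set B := A.filter (¬E · w)
  have hsplit : #(A.bipartiteBelow E w) + #B = #A := card_filter_add_card_filter_not _
  have hcovered : 1 ≤ #(A.bipartiteBelow E w) := by
    have : (0 : ℝ) < a * #(A.bipartiteBelow E w) := lt_of_lt_of_le (by simpa using hA) hw
    exact_mod_cast (pos_of_mul_pos_right this ha.le)
  have hBA : B ⊂ A := by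
    obtain ⟨u, hu⟩ := card_pos.1 hcovered
    obtain ⟨huA, huw⟩ := (mem_bipartiteBelow E).1 hu
    exact filter_ssubset.2 ⟨u, huA, not_not.2 huw⟩
  obtain ⟨S, hS, hcard⟩ := ih B hBA
  refine ⟨insert w S, fun u hu => ?_, ?_⟩
  · by_cases huw : E u w
    · exact ⟨w, mem_insert_self _ _, huw⟩
    · obtain ⟨w', hw', huw'⟩ := hS u (mem_filter.2 ⟨hu, huw⟩)
      exact ⟨w', mem_insert_of_mem hw', huw'⟩
  · have hsplitR : (#B : ℝ) = #A - #(A.bipartiteBelow E w) := by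
      rw [← hsplit]; push_cast; ring
    calc (#(insert w S) : ℝ) ≤ #S + 1 := by exact_mod_cast card_insert_le _ _
      _ ≤ coverBound a #B + 1 := by linarith
      _ ≤ coverBound a #A := coverBound_add_one_le ha (by positivity)
          (by rw [hsplitR]; gcongr; exact_mod_cast hcovered)
          (by rw [hsplitR]; gcongr; rwa [div_le_iff₀' ha])

theorem exists_card_le_mul_card_bipartiteBelow [Fintype W] [Nonempty W] {x : ℕ} (hx : 0 < x)
    (A : Finset U) (hA : ∀ u ∈ A, x ≤ #(univ.bipartiteAbove E u)) :
    ∃ w, (#A : ℝ) ≤ (Fintype.card W / x : ℝ) * #(A.bipartiteBelow E w) := by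
  have hcount : #A * x ≤ ∑ w, #(A.bipartiteBelow E w) := by
    rw [← sum_card_bipartiteAbove_eq_sum_card_bipartiteBelow, ← smul_eq_mul]
    exact card_nsmul_le_sum _ _ _ hA
  obtain ⟨w, -, hw⟩ := exists_le_of_sum_le univ_nonempty
    (f := fun _ => #A * x) (g := fun w => Fintype.card W * #(A.bipartiteBelow E w))
    (by rw [sum_const, card_univ, smul_eq_mul, ← mul_sum]
        exact Nat.mul_le_mul_left _ hcount)
  refine ⟨w, ?_⟩
  rw [div_mul_eq_mul_div, le_div_iff₀ (by positivity)]
  exact_mod_cast hw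

end Cover

theorem stmt3_general {U W : Type*} [Fintype U] [Fintype W] (E : U → W → Prop)
    [∀ u w, Decidable (E u w)] (x y : ℕ) (hx : 1 ≤ x)
    (hU : ∀ u : U, x ≤ (univ.filter (fun w => E u w)).card)
    (hW : ∀ w : W, (univ.filter (fun u => E u w)).card ≤ y) :
    ∃ W' : Finset W, (∀ u : U, ∃ w ∈ W', E u w) ∧
      (W'.card : ℝ) ≤ ((Fintype.card W : ℝ) / x) * (1 + Real.log y) := by
  have hlog : 0 ≤ 1 + log y := by linarith [log_natCast_nonneg y]
  rcases isEmpty_or_nonempty U with hU₀ | ⟨⟨u₀⟩⟩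
  · exact ⟨∅, isEmptyElim, by simpa using mul_nonneg (by positivity) hlog⟩
  have hxW : x ≤ Fintype.card W := (hU u₀).trans (card_le_univ _)
  have : Nonempty W := Fintype.card_pos_iff.1 (by omega)
  have ha : (0 : ℝ) < Fintype.card W / x := by
    have : 0 < Fintype.card W := by omega
    positivity
  obtain ⟨S, hS, hcard⟩ := exists_cover_card_le_coverBound E ha
    (fun A _ => exists_card_le_mul_card_bipartiteBelow E hx A fun u _ => hU u) univ
  refine ⟨S, fun u => hS u (mem_univ u),
    hcard.trans (coverBound_le ha (log_natCast_nonneg y) ?_)⟩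
  have hcount : Fintype.card U * x ≤ Fintype.card W * y := by
    simpa using card_mul_le_card_mul E (fun u _ => hU u) (fun w _ => hW w)
  rw [div_div_eq_mul_div, div_le_iff₀ (by positivity), mul_comm (y : ℝ)]
  exact_mod_cast hcount

/-- Lovász–Stein covering lemma: in a bipartite graph with parts `U`, `W`, if every
`u ∈ U` has at least `x` neighbours and every `w ∈ W` has at most `y` neighbours,
then some `W' ⊆ W` covers `U` with `|W'| ≤ (|W|/x)(1 + ln y)`. -/
theorem stmt3 {U W : Type*} [Fintype U] [Fintype W] (E : U → W → Prop)
    [∀ u w, Decidable (E u w)] (x y : ℕ) (hx : 1 ≤ x) (hy : 1 ≤ y)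
    (hU : ∀ u : U, x ≤ (univ.filter (fun w => E u w)).card)
    (hW : ∀ w : W, (univ.filter (fun u => E u w)).card ≤ y) :
    ∃ W' : Finset W, (∀ u : U, ∃ w ∈ W', E u w) ∧
      (W'.card : ℝ) ≤ ((Fintype.card W : ℝ) / x) * (1 + Real.log y) :=
  stmt3_general E x y hx hU hW
end

section
/- Let k ≤ ⌈n/2⌉, fix X ⊆ ⋃_{i>k} L_i, and for Y a union of layers write Y^X = {v ∈ Y : v ⊄ w for all w ∈ X}. For A ⊆ L^X_{k−1} write N⁺(A) for the set of elements of L^X_k containing some element of A, Int(A) = {v ∈ L^X_{k−2} : N⁺(v) ⊆ A}, and w(A) = λ^{|A|}(1+λ)^{−|N⁺(A)|} · ∑_{B ⊆ Int(A)} λ^{|B|−|N⁺(B)|}. Then ∑_{S ⊆ L^X_{k−2} ∪ L^X_{k−1} ∪ L^X_k, S antichain} λ^{|S|} = (1+λ)^{|L^X_k|} · ∑_{A ⊆ L^X_{k−1}} w(A), where the sum ranges over all subsets A of L^X_{k−1} (each such A being an antichain). -/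
/-!
An antichain `S` of `L^X_{k−2} ∪ L^X_{k−1} ∪ L^X_k` is recovered from `A = ρ(S)`,
`B = S ∩ L^X_{k−2}` and `C = S ∩ L^X_k` as `S = B ∪ (A \ N⁺(B)) ∪ C`, and the triples that
arise are exactly those with `A ⊆ L^X_{k−1}`, `B ⊆ Int(A)` and `C ⊆ L^X_k \ N⁺(A)`. The only
incomparability that is not immediate is between `B` and `C`: a chain `v ⊂ x` from `L^X_{k−2}`
to `L_k` passes through some `u ∈ L^X_{k−1}`, which lies in `N⁺(v) ⊆ A`, so `x ∈ N⁺(A)`.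
Since `|S| = |A| + (|B| − |N⁺(B)|) + |C|`, summing over `C ⊆ L^X_k \ N⁺(A)` produces the
factor `(1+λ)^{|L^X_k| − |N⁺(A)|}`, and what remains is `w(A)`.
-/

open Finset
open scoped Classical

/-- The `i`-th layer of `B_n` restricted by `X`: elements `v` of the layer with
`v ⊄ w` for all `w ∈ X`. -/
noncomputable def layerX (n : ℕ) (X : Finset (Finset (Fin n))) (i : ℕ) :
    Finset (Finset (Fin n)) :=
  univ.filter (fun v => v.card = i ∧ ∀ w ∈ X, ¬ v ⊂ w)

/-- The up-neighbourhood of `A` in the restricted layer `L^X_j`: elements of `L^X_j`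
strictly containing some element of `A`. -/
noncomputable def upN (n : ℕ) (X : Finset (Finset (Fin n))) (j : ℕ)
    (A : Finset (Finset (Fin n))) : Finset (Finset (Fin n)) :=
  (layerX n X j).filter (fun x => ∃ v ∈ A, v ⊂ x)

/-- The interior of `A ⊆ L^X_{k−1}`: elements `v` of `L^X_{k−2}` with `N⁺(v) ⊆ A`. -/
noncomputable def interiorX (n : ℕ) (X : Finset (Finset (Fin n))) (k : ℕ)
    (A : Finset (Finset (Fin n))) : Finset (Finset (Fin n)) :=
  (layerX n X (k - 2)).filter (fun v => upN n X (k - 1) {v} ⊆ A)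

/-- The polymer weight `w(A) = λ^{|A|}(1+λ)^{−|N⁺(A)|} ∑_{B ⊆ Int(A)} λ^{|B|−|N⁺(B)|}`. -/
noncomputable def polyWeight (n : ℕ) (X : Finset (Finset (Fin n))) (k : ℕ) (lam : ℝ)
    (A : Finset (Finset (Fin n))) : ℝ :=
  lam ^ A.card * ((1 + lam) ^ (upN n X k A).card)⁻¹ *
    ∑ B ∈ (interiorX n X k A).powerset,
      lam ^ ((B.card : ℤ) - ((upN n X (k - 1) B).card : ℤ))

/-- `S` is an antichain: its elements are pairwise incomparable under inclusion. -/
def IsAntichainF {n : ℕ} (S : Finset (Finset (Fin n))) : Prop :=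
  ∀ u ∈ S, ∀ v ∈ S, u ≠ v → ¬ u ⊆ v

section Layers

variable {n : ℕ} {X : Finset (Finset (Fin n))}

lemma mem_layerX {i : ℕ} {v : Finset (Fin n)} :
    v ∈ layerX n X i ↔ #v = i ∧ ∀ w ∈ X, ¬ v ⊂ w := by
  simp [layerX]

lemma card_of_mem_inter_layerX {S : Finset (Finset (Fin n))} {i : ℕ} {v : Finset (Fin n)}
    (hv : v ∈ S ∩ layerX n X i) : #v = i :=
  (mem_layerX.1 (mem_inter.1 hv).2).1

lemma disjoint_layerX {i j : ℕ} (hij : i ≠ j) : Disjoint (layerX n X i) (layerX n X j) :=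
  disjoint_left.2 fun _ hi hj => hij ((mem_layerX.1 hi).1 ▸ (mem_layerX.1 hj).1)

lemma inter_layerX_eq_empty {s : Finset (Finset (Fin n))} {i j : ℕ} (hs : s ⊆ layerX n X i)
    (hij : i ≠ j) : s ∩ layerX n X j = ∅ :=
  disjoint_iff_inter_eq_empty.1 ((disjoint_layerX hij).mono_left hs)

lemma mem_upN {j : ℕ} {A : Finset (Finset (Fin n))} {x : Finset (Fin n)} :
    x ∈ upN n X j A ↔ x ∈ layerX n X j ∧ ∃ v ∈ A, v ⊂ x := mem_filter

lemma upN_subset_layerX {j : ℕ} {A : Finset (Finset (Fin n))} :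
    upN n X j A ⊆ layerX n X j := filter_subset _ _

lemma upN_mono {j : ℕ} {A A' : Finset (Finset (Fin n))} (h : A ⊆ A') :
    upN n X j A ⊆ upN n X j A' := fun x hx => by
  obtain ⟨hx, v, hv, hvx⟩ := mem_upN.1 hx
  exact mem_upN.2 ⟨hx, v, h hv, hvx⟩

lemma upN_subset_of_subset_interiorX {k : ℕ} {A B : Finset (Finset (Fin n))}
    (hB : B ⊆ interiorX n X k A) : upN n X (k - 1) B ⊆ A := by
  intro u hu
  obtain ⟨hu, v, hv, hvu⟩ := mem_upN.1 hu
  exact (mem_filter.1 (hB hv)).2 (mem_upN.2 ⟨hu, v, mem_singleton_self v, hvu⟩)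

lemma exists_mem_layerX_between {i j : ℕ} {v x : Finset (Fin n)} (hv : v ∈ layerX n X i)
    (hvx : v ⊆ x) (hij : i ≤ j) (hjx : j ≤ #x) : ∃ u ∈ layerX n X j, v ⊆ u ∧ u ⊆ x := by
  obtain ⟨hvi, hvX⟩ := mem_layerX.1 hv
  obtain ⟨u, hvu, hux, hu⟩ := exists_subsuperset_card_eq hvx (hvi ▸ hij) hjx
  exact ⟨u, mem_layerX.2 ⟨hu, fun w hw huw => hvX w hw (hvu.trans_ssubset huw)⟩, hvu, hux⟩

end Layers

lemma isAntichainF_iff {n : ℕ} {S : Finset (Finset (Fin n))} :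
    IsAntichainF S ↔ ∀ u ∈ S, ∀ v ∈ S, ¬ u ⊂ v := by
  simp only [IsAntichainF, ssubset_iff_subset_ne]
  grind

section ThreeLayers

variable {n k : ℕ} {X : Finset (Finset (Fin n))}

/-- The set `ρ(S) = (S ∩ L^X_{k−1}) ∪ N⁺(S ∩ L^X_{k−2})`. -/
noncomputable def polymerOf (n : ℕ) (X : Finset (Finset (Fin n))) (k : ℕ)
    (S : Finset (Finset (Fin n))) : Finset (Finset (Fin n)) :=
  (S ∩ layerX n X (k - 1)) ∪ upN n X (k - 1) (S ∩ layerX n X (k - 2))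

/-- Inverse of `S ↦ (ρ(S), S ∩ L^X_{k−2}, S ∩ L^X_k)` on antichains. -/
noncomputable def assemble (n : ℕ) (X : Finset (Finset (Fin n))) (k : ℕ)
    (A B C : Finset (Finset (Fin n))) : Finset (Finset (Fin n)) :=
  B ∪ (A \ upN n X (k - 1) B) ∪ C

noncomputable def decompositions (n : ℕ) (X : Finset (Finset (Fin n))) (k : ℕ) :
    Finset ((_ : Finset (Finset (Fin n))) × Finset (Finset (Fin n)) × Finset (Finset (Fin n))) :=
  (layerX n X (k - 1)).powerset.sigma fun A =>
    (interiorX n X k A).powerset ×ˢ (layerX n X k \ upN n X k A).powerset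

lemma isAntichainF_iff_disjoint_upN (hk2 : 2 ≤ k) {S : Finset (Finset (Fin n))}
    (hS : S ⊆ layerX n X (k - 2) ∪ layerX n X (k - 1) ∪ layerX n X k) :
    IsAntichainF S ↔
      Disjoint (S ∩ layerX n X (k - 1)) (upN n X (k - 1) (S ∩ layerX n X (k - 2))) ∧
      Disjoint (S ∩ layerX n X k) (upN n X k (polymerOf n X k S)) := by
  rw [isAntichainF_iff]
  constructor
  · intro hS
    refine ⟨disjoint_left.2 fun u hu hu' => ?_, disjoint_left.2 fun x hx hx' => ?_⟩
    · obtain ⟨-, v, hv, hvu⟩ := mem_upN.1 hu'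
      exact hS v (mem_inter.1 hv).1 u (mem_inter.1 hu).1 hvu
    · obtain ⟨-, u, hu, hux⟩ := mem_upN.1 hx'
      rcases mem_union.1 hu with hu | hu
      · exact hS u (mem_inter.1 hu).1 x (mem_inter.1 hx).1 hux
      · obtain ⟨-, v, hv, hvu⟩ := mem_upN.1 hu
        exact hS v (mem_inter.1 hv).1 x (mem_inter.1 hx).1 (hvu.trans hux)
  · rintro ⟨h1, h0⟩ u hu v hv huv
    have hlayer : ∀ u ∈ S, u ∈ S ∩ layerX n X (k - 2) ∨ u ∈ S ∩ layerX n X (k - 1) ∨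
        u ∈ S ∩ layerX n X k := fun u hu => by
      simpa [mem_inter, hu, or_assoc] using hS hu
    have hlt := card_lt_card huv
    rcases hlayer u hu with hu | hu | hu <;> rcases hlayer v hv with hv | hv | hv <;>
      rw [card_of_mem_inter_layerX hu, card_of_mem_inter_layerX hv] at hlt <;> try omega
    · exact disjoint_left.1 h1 hv (mem_upN.2 ⟨(mem_inter.1 hv).2, u, hu, huv⟩)
    · obtain ⟨w, hw, huw, hwv⟩ := exists_mem_layerX_between (mem_inter.1 hu).2 huv.1
        (j := k - 1) (by omega) (by rw [card_of_mem_inter_layerX hv]; omega)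
      have hw_card := (mem_layerX.1 hw).1
      have huw : u ⊂ w := huw.ssubset_of_ne <| by
        rintro rfl; rw [card_of_mem_inter_layerX hu] at hw_card; omega
      have hwv : w ⊂ v := hwv.ssubset_of_ne <| by
        rintro rfl; rw [card_of_mem_inter_layerX hv] at hw_card; omega
      exact disjoint_left.1 h0 hv (mem_upN.2 ⟨(mem_inter.1 hv).2, w,
        mem_union_right _ (mem_upN.2 ⟨hw, u, hu, huw⟩), hwv⟩)
    · exact disjoint_left.1 h0 hv (mem_upN.2 ⟨(mem_inter.1 hv).2, u, mem_union_left _ hu, huv⟩)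

lemma mem_decompositions {p : (_ : Finset (Finset (Fin n))) × Finset (Finset (Fin n)) ×
    Finset (Finset (Fin n))} :
    p ∈ decompositions n X k ↔ p.1 ⊆ layerX n X (k - 1) ∧ p.2.1 ⊆ interiorX n X k p.1 ∧
      p.2.2 ⊆ layerX n X k \ upN n X k p.1 := by
  simp [decompositions]

lemma polymerOf_subset_layerX (S : Finset (Finset (Fin n))) :
    polymerOf n X k S ⊆ layerX n X (k - 1) :=
  union_subset inter_subset_right upN_subset_layerX

lemma inter_layerX_subset_interiorX_polymerOf (S : Finset (Finset (Fin n))) :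
    S ∩ layerX n X (k - 2) ⊆ interiorX n X k (polymerOf n X k S) := fun _ hv =>
  mem_filter.2 ⟨(mem_inter.1 hv).2,
    (upN_mono (singleton_subset_iff.2 hv)).trans subset_union_right⟩

lemma assemble_polymerOf {S : Finset (Finset (Fin n))}
    (hS : S ⊆ layerX n X (k - 2) ∪ layerX n X (k - 1) ∪ layerX n X k)
    (h : Disjoint (S ∩ layerX n X (k - 1)) (upN n X (k - 1) (S ∩ layerX n X (k - 2)))) :
    assemble n X k (polymerOf n X k S) (S ∩ layerX n X (k - 2)) (S ∩ layerX n X k) = S := by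
  rw [assemble, polymerOf, union_sdiff_cancel_right h, ← inter_union_distrib_left,
    ← inter_union_distrib_left, inter_eq_left.2 hS]

lemma assemble_inter_layerX (hk2 : 2 ≤ k) {A B C : Finset (Finset (Fin n))}
    (hA : A ⊆ layerX n X (k - 1)) (hB : B ⊆ layerX n X (k - 2)) (hC : C ⊆ layerX n X k) :
    assemble n X k A B C ∩ layerX n X (k - 2) = B ∧
      assemble n X k A B C ∩ layerX n X (k - 1) = A \ upN n X (k - 1) B ∧
      assemble n X k A B C ∩ layerX n X k = C := by
  have hD : A \ upN n X (k - 1) B ⊆ layerX n X (k - 1) := sdiff_subset.trans hA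
  simp only [assemble, union_inter_distrib_right, inter_eq_left.2 hB, inter_eq_left.2 hD,
    inter_eq_left.2 hC, inter_layerX_eq_empty hB (show k - 2 ≠ k - 1 by omega),
    inter_layerX_eq_empty hB (show k - 2 ≠ k by omega),
    inter_layerX_eq_empty hD (show k - 1 ≠ k - 2 by omega),
    inter_layerX_eq_empty hD (show k - 1 ≠ k by omega),
    inter_layerX_eq_empty hC (show k ≠ k - 2 by omega),
    inter_layerX_eq_empty hC (show k ≠ k - 1 by omega), union_empty, empty_union, and_self]

lemma subset_interiorX_left {A B : Finset (Finset (Fin n))} (hB : B ⊆ interiorX n X k A) :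
    B ⊆ layerX n X (k - 2) :=
  hB.trans (filter_subset _ _)

lemma polymerOf_assemble (hk2 : 2 ≤ k) {A B C : Finset (Finset (Fin n))}
    (hA : A ⊆ layerX n X (k - 1)) (hB : B ⊆ interiorX n X k A) (hC : C ⊆ layerX n X k) :
    polymerOf n X k (assemble n X k A B C) = A := by
  obtain ⟨h2, h1, -⟩ := assemble_inter_layerX hk2 hA (subset_interiorX_left hB) hC
  rw [polymerOf, h2, h1, sdiff_union_of_subset (upN_subset_of_subset_interiorX hB)]

lemma assemble_subset_union_layerX {A B C : Finset (Finset (Fin n))}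
    (hA : A ⊆ layerX n X (k - 1)) (hB : B ⊆ layerX n X (k - 2)) (hC : C ⊆ layerX n X k) :
    assemble n X k A B C ⊆ layerX n X (k - 2) ∪ layerX n X (k - 1) ∪ layerX n X k :=
  union_subset_union (union_subset_union hB (sdiff_subset.trans hA)) hC

lemma isAntichainF_assemble (hk2 : 2 ≤ k) {A B C : Finset (Finset (Fin n))}
    (hA : A ⊆ layerX n X (k - 1)) (hB : B ⊆ interiorX n X k A)
    (hC : C ⊆ layerX n X k \ upN n X k A) :
    IsAntichainF (assemble n X k A B C) := by
  have hC' := hC.trans sdiff_subset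
  obtain ⟨h2, h1, h0⟩ := assemble_inter_layerX hk2 hA (subset_interiorX_left hB) hC'
  rw [isAntichainF_iff_disjoint_upN hk2
    (assemble_subset_union_layerX hA (subset_interiorX_left hB) hC'),
    h2, h1, h0, polymerOf_assemble hk2 hA hB hC']
  exact ⟨sdiff_disjoint, (subset_sdiff.1 hC).2⟩

lemma sum_antichains_eq_sum_decompositions (hk2 : 2 ≤ k) {M : Type*} [AddCommMonoid M]
    (g : Finset (Finset (Fin n)) → M) :
    ∑ S ∈ (layerX n X (k - 2) ∪ layerX n X (k - 1) ∪ layerX n X k).powerset.filter IsAntichainF,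
        g S
      = ∑ p ∈ decompositions n X k, g (assemble n X k p.1 p.2.1 p.2.2) := by
  have hS : ∀ S ∈ (layerX n X (k - 2) ∪ layerX n X (k - 1) ∪ layerX n X k).powerset.filter
      IsAntichainF, S ⊆ layerX n X (k - 2) ∪ layerX n X (k - 1) ∪ layerX n X k ∧
        Disjoint (S ∩ layerX n X (k - 1)) (upN n X (k - 1) (S ∩ layerX n X (k - 2))) ∧
        Disjoint (S ∩ layerX n X k) (upN n X k (polymerOf n X k S)) := fun S hS => by
    rw [mem_filter, mem_powerset] at hS
    exact ⟨hS.1, (isAntichainF_iff_disjoint_upN hk2 hS.1).1 hS.2⟩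
  refine sum_nbij' (fun S => ⟨polymerOf n X k S, S ∩ layerX n X (k - 2), S ∩ layerX n X k⟩)
    (fun p => assemble n X k p.1 p.2.1 p.2.2) ?_ ?_ ?_ ?_ ?_
  · intro S hS'
    obtain ⟨-, -, h0⟩ := hS S hS'
    exact mem_decompositions.2 ⟨polymerOf_subset_layerX S,
      inter_layerX_subset_interiorX_polymerOf S, subset_sdiff.2 ⟨inter_subset_right, h0⟩⟩
  · rintro ⟨A, B, C⟩ hp
    obtain ⟨hA, hB, hC⟩ := mem_decompositions.1 hp
    exact mem_filter.2 ⟨mem_powerset.2 (assemble_subset_union_layerX hA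
      (subset_interiorX_left hB) (hC.trans sdiff_subset)), isAntichainF_assemble hk2 hA hB hC⟩
  · intro S hS'
    obtain ⟨hsub, h1, -⟩ := hS S hS'
    exact assemble_polymerOf hsub h1
  · rintro ⟨A, B, C⟩ hp
    obtain ⟨hA, hB, hC⟩ := mem_decompositions.1 hp
    have hC' := hC.trans sdiff_subset
    obtain ⟨h2, -, h0⟩ := assemble_inter_layerX hk2 hA (subset_interiorX_left hB) hC'
    simp only [h2, h0, polymerOf_assemble hk2 hA hB hC']
  · intro S hS'
    obtain ⟨hsub, h1, -⟩ := hS S hS'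
    rw [assemble_polymerOf hsub h1]

end ThreeLayers

section Weights

variable {n k : ℕ} {X : Finset (Finset (Fin n))}

lemma card_eq_add_card_inter_layerX (hk2 : 2 ≤ k) {S : Finset (Finset (Fin n))}
    (hS : S ⊆ layerX n X (k - 2) ∪ layerX n X (k - 1) ∪ layerX n X k) :
    #S = #(S ∩ layerX n X (k - 2)) + #(S ∩ layerX n X (k - 1)) + #(S ∩ layerX n X k) := by
  have hdisj {i j : ℕ} (hij : i ≠ j) : Disjoint (S ∩ layerX n X i) (S ∩ layerX n X j) :=
    (disjoint_layerX hij).mono inter_subset_right inter_subset_right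
  conv_lhs => rw [← inter_eq_left.2 hS, inter_union_distrib_left, inter_union_distrib_left]
  rw [card_union_of_disjoint (disjoint_union_left.2 ⟨hdisj (by omega), hdisj (by omega)⟩),
    card_union_of_disjoint (hdisj (by omega))]

lemma card_assemble (hk2 : 2 ≤ k) {A B C : Finset (Finset (Fin n))}
    (hA : A ⊆ layerX n X (k - 1)) (hB : B ⊆ interiorX n X k A) (hC : C ⊆ layerX n X k) :
    #(assemble n X k A B C) = #B + (#A - #(upN n X (k - 1) B)) + #C := by
  obtain ⟨h2, h1, h0⟩ := assemble_inter_layerX hk2 hA (subset_interiorX_left hB) hC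
  rw [card_eq_add_card_inter_layerX hk2
    (assemble_subset_union_layerX hA (subset_interiorX_left hB) hC), h2, h1, h0,
    card_sdiff_of_subset (upN_subset_of_subset_interiorX hB)]

lemma sum_pow_card_powerset (s : Finset (Finset (Fin n))) (lam : ℝ) :
    ∑ C ∈ s.powerset, lam ^ #C = (1 + lam) ^ #s := by
  simpa [add_comm] using sum_pow_mul_eq_add_pow lam 1 s

lemma sum_pow_card_assemble (hk2 : 2 ≤ k) {lam : ℝ} (hlam : 0 < lam)
    {A : Finset (Finset (Fin n))} (hA : A ⊆ layerX n X (k - 1)) :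
    ∑ B ∈ (interiorX n X k A).powerset, ∑ C ∈ (layerX n X k \ upN n X k A).powerset,
        lam ^ #(assemble n X k A B C)
      = (1 + lam) ^ #(layerX n X k) * polyWeight n X k lam A := by
  have hN : #(upN n X k A) ≤ #(layerX n X k) := card_le_card upN_subset_layerX
  have hterm : ∀ B ⊆ interiorX n X k A, ∀ C ⊆ layerX n X k \ upN n X k A,
      lam ^ #(assemble n X k A B C)
        = lam ^ #A * lam ^ ((#B : ℤ) - #(upN n X (k - 1) B)) * lam ^ #C := by
    intro B hB C hC
    have hNB := card_le_card (upN_subset_of_subset_interiorX hB)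
    rw [card_assemble hk2 hA hB (hC.trans sdiff_subset), ← zpow_natCast, ← zpow_natCast,
      ← zpow_natCast, ← zpow_add₀ hlam.ne', ← zpow_add₀ hlam.ne']
    congr 1
    push_cast [hNB]
    ring
  calc _ = ∑ B ∈ (interiorX n X k A).powerset, lam ^ #A *
        lam ^ ((#B : ℤ) - #(upN n X (k - 1) B)) * (1 + lam) ^ #(layerX n X k \ upN n X k A) := by
        refine sum_congr rfl fun B hB => ?_
        rw [← sum_pow_card_powerset, mul_sum]
        exact sum_congr rfl fun C hC => hterm B (mem_powerset.1 hB) C (mem_powerset.1 hC)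
    _ = _ := by
        rw [polyWeight, card_sdiff_of_subset upN_subset_layerX, pow_sub₀ _ (by positivity) hN,
          ← sum_mul, ← mul_sum]
        ring

end Weights

theorem stmt6_general (n k : ℕ) (hk2 : 2 ≤ k)
    (X : Finset (Finset (Fin n)))
    (lam : ℝ) (hlam : 0 < lam) :
    (∑ S ∈ ((layerX n X (k - 2) ∪ layerX n X (k - 1) ∪ layerX n X k).powerset).filter
        (fun S => IsAntichainF S), lam ^ S.card)
      = (1 + lam) ^ (layerX n X k).card *
          ∑ A ∈ (layerX n X (k - 1)).powerset, polyWeight n X k lam A := by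
  rw [sum_antichains_eq_sum_decompositions hk2, decompositions, sum_sigma, mul_sum]
  refine sum_congr rfl fun A hA => ?_
  rw [sum_product, sum_pow_card_assemble hk2 hlam (mem_powerset.1 hA)]

/-- The antichain partition function of the three restricted consecutive layers
`L^X_{k−2} ∪ L^X_{k−1} ∪ L^X_k` equals `(1+λ)^{|L^X_k|} ∑_{A ⊆ L^X_{k−1}} w(A)`. -/
theorem stmt6 (n k : ℕ) (hk2 : 2 ≤ k) (hk : k ≤ (n + 1) / 2)
    (X : Finset (Finset (Fin n))) (hX : ∀ w ∈ X, k < w.card)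
    (lam : ℝ) (hlam : 0 < lam) :
    (∑ S ∈ ((layerX n X (k - 2) ∪ layerX n X (k - 1) ∪ layerX n X k).powerset).filter
        (fun S => IsAntichainF S), lam ^ S.card)
      = (1 + lam) ^ (layerX n X k).card *
          ∑ A ∈ (layerX n X (k - 1)).powerset, polyWeight n X k lam A :=
  stmt6_general n k hk2 X lam hlam
end

section
/- Fix k ≤ ⌊n/2⌋ and embed B_n into B_{2n−2k} via w ↦ w⁺ := w ∪ {n+1, …, 2n−2k}. For X ⊆ ⋃_{i > k} L_i(B_n), let X' = {w⁺ : w ∈ X} ∪ ⋃_{j=n+1}^{2n−2k} {[2n−2k] \ {j}}. Then the map A ↦ A⁺ = {w⁺ : w ∈ A} is a size-preserving bijection between antichains contained in L^X_{[k−1,k]}(B_n) and antichains contained in L̄^{X'}_{[n−k−1, n−k]}(B_{2n−2k}), where for layers Y and a set S, Y^S = {v ∈ Y : v ⊄ u for all u ∈ S}. -/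
/-!
Every set in the two source layers lies in `[n]`, so `w ↦ w ∪ {n, …, 2n−2k−1}` is an order
embedding there and maps layer `i` to layer `i + n − 2k`. Conversely, a member `u` of a target
layer is too small to equal any `[2n−2k] \ {j}`, so avoiding all of them forces `u` to contain the
whole tail; then `u` is the image of `u ∩ [n]`. The layerwise bijection, being an order embedding,
carries antichains to antichains in both directions.
-/

open Finset

/-- `S` is an antichain of finite sets: pairwise incomparable under inclusion. -/
def FinAntichain (S : Finset (Finset ℕ)) : Prop :=
  ∀ u ∈ S, ∀ v ∈ S, u ≠ v → ¬ u ⊆ v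

/-- The `i`-th layer of the Boolean lattice on ground set `range n`, restricted by
`X`: elements `v` of the layer with `v ⊄ w` for all `w ∈ X`. -/
def layerRes (n i : ℕ) (X : Finset (Finset ℕ)) : Set (Finset ℕ) :=
  {v | v ⊆ Finset.range n ∧ v.card = i ∧ ∀ w ∈ X, ¬ v ⊂ w}

section OrderEmbedding

variable {g : Finset ℕ → Finset ℕ} {L L' : Set (Finset ℕ)}

theorem FinAntichain.image {S : Finset (Finset ℕ)} (hS : FinAntichain S)
    (hg : ∀ u ∈ S, ∀ v ∈ S, g u ⊆ g v → u ⊆ v) : FinAntichain (S.image g) := by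
  simp only [FinAntichain, mem_image]
  rintro _ ⟨u, hu, rfl⟩ _ ⟨v, hv, rfl⟩ hne huv
  exact hS u hu v hv (fun h => hne (h ▸ rfl)) (hg u hu v hv huv)

theorem injOn_of_subset_iff (hg : ∀ u ∈ L, ∀ v ∈ L, g u ⊆ g v ↔ u ⊆ v) : Set.InjOn g L :=
  fun u hu v hv huv =>
    subset_antisymm ((hg u hu v hv).1 huv.le) ((hg v hv u hu).1 huv.ge)

theorem bijOn_image_finAntichain (hg : ∀ u ∈ L, ∀ v ∈ L, g u ⊆ g v ↔ u ⊆ v)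
    (hL : g '' L = L') :
    Set.BijOn (fun S : Finset (Finset ℕ) => S.image g)
      {S | FinAntichain S ∧ ∀ v ∈ S, v ∈ L} {S | FinAntichain S ∧ ∀ v ∈ S, v ∈ L'} := by
  refine ⟨?mapsTo, ?injOn, ?surjOn⟩
  case mapsTo =>
    rintro S ⟨hS, hSL⟩
    refine ⟨hS.image fun u hu v hv => (hg u (hSL u hu) v (hSL v hv)).1, ?_⟩
    simp only [mem_image]
    rintro _ ⟨v, hv, rfl⟩
    exact hL ▸ Set.mem_image_of_mem g (hSL v hv)
  case injOn =>
    rintro S ⟨-, hSL⟩ T ⟨-, hTL⟩ hST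
    rw [← coe_inj, ← (injOn_of_subset_iff hg).image_eq_image_iff (fun v hv => hSL v hv)
      (fun v hv => hTL v hv), ← coe_image, ← coe_image]
    exact congrArg _ hST
  case surjOn =>
    rintro T ⟨hT, hTL'⟩
    obtain ⟨S, hSL, rfl⟩ := subset_set_image_iff.1 (hL ▸ fun v hv => hTL' v hv : ↑T ⊆ g '' L)
    refine ⟨S, ⟨?_, fun v hv => hSL hv⟩, rfl⟩
    intro u hu v hv hne huv
    exact hT (g u) (mem_image_of_mem g hu) (g v) (mem_image_of_mem g hv)
      (fun h => hne (injOn_of_subset_iff hg (hSL hu) (hSL hv) h))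
      ((hg u (hSL hu) v (hSL hv)).2 huv)

end OrderEmbedding

section Padding

variable {n m i : ℕ} {u v w : Finset ℕ} {X : Finset (Finset ℕ)}

theorem union_Ico_subset_union_Ico_iff (hv : v ⊆ range n) :
    v ∪ Ico n m ⊆ w ∪ Ico n m ↔ v ⊆ w := by
  refine ⟨fun h x hx => ?_, fun h => union_subset_union_left h⟩
  have hxn := mem_range.1 (hv hx)
  rcases mem_union.1 (h (mem_union_left _ hx)) with hxw | hxI
  · exact hxw
  · exact absurd (mem_Ico.1 hxI).1 (by omega)

theorem union_Ico_ssubset_union_Ico_iff (hv : v ⊆ range n) (hw : w ⊆ range n) :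
    v ∪ Ico n m ⊂ w ∪ Ico n m ↔ v ⊂ w := by
  simp only [ssubset_def, union_Ico_subset_union_Ico_iff hv, union_Ico_subset_union_Ico_iff hw]

theorem card_union_Ico (hv : v ⊆ range n) : (v ∪ Ico n m).card = v.card + (m - n) := by
  rw [card_union_of_disjoint, Nat.card_Ico]
  exact disjoint_left.2 fun x hxv hxI => by
    have := mem_range.1 (hv hxv); have := (mem_Ico.1 hxI).1; omega

theorem inter_range_union_Ico (hu : u ⊆ range m) (hI : Ico n m ⊆ u) :
    u ∩ range n ∪ Ico n m = u := by
  refine subset_antisymm (union_subset inter_subset_left hI) fun x hx => ?_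
  have := mem_range.1 (hu hx)
  by_cases hxn : x < n
  · exact mem_union_left _ (mem_inter.2 ⟨hx, mem_range.2 hxn⟩)
  · exact mem_union_right _ (mem_Ico.2 ⟨by omega, this⟩)

/-- The paper's `X'`, for ground set `range m` and padding `Ico n m`. -/
def padFamily (n m : ℕ) (X : Finset (Finset ℕ)) : Finset (Finset ℕ) :=
  X.image (· ∪ Ico n m) ∪ (Ico n m).image fun j => (range m).erase j

theorem union_Ico_mem_layerRes_padFamily (hX : ∀ w ∈ X, w ⊆ range n) (hnm : n ≤ m)
    (hv : v ∈ layerRes n i X) : v ∪ Ico n m ∈ layerRes m (i + (m - n)) (padFamily n m X) := by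
  obtain ⟨hvn, hvi, hvX⟩ := hv
  refine ⟨union_subset (hvn.trans (range_subset_range.2 hnm)) fun x hx =>
    mem_range.2 (mem_Ico.1 hx).2, by rw [card_union_Ico hvn, hvi], ?_⟩
  simp only [padFamily, mem_union, mem_image]
  rintro _ (⟨w, hw, rfl⟩ | ⟨j, hj, rfl⟩) hss
  · exact hvX w hw ((union_Ico_ssubset_union_Ico_iff hvn (hX w hw)).1 hss)
  · exact notMem_erase j _ (hss.subset (mem_union_right _ hj))

theorem Ico_subset_of_mem_layerRes_padFamily (hi : n < m → i + 1 < m)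
    (hu : u ∈ layerRes m i (padFamily n m X)) : Ico n m ⊆ u := by
  obtain ⟨hum, hui, huX⟩ := hu
  intro j hj
  by_contra hju
  have hjm := mem_Ico.1 hj
  refine huX _ (mem_union_right _ (mem_image_of_mem _ hj)) (ssubset_of_subset_of_ne
    (subset_erase.2 ⟨hum, hju⟩) fun h => ?_)
  have := congrArg card h
  rw [card_erase_of_mem (mem_range.2 hjm.2), card_range] at this
  omega

theorem mem_layerRes_of_mem_layerRes_padFamily (hX : ∀ w ∈ X, w ⊆ range n)
    (hi : n < m → i + 1 < n) (hu : u ∈ layerRes m (i + (m - n)) (padFamily n m X)) :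
    u ∩ range n ∈ layerRes n i X ∧ u ∩ range n ∪ Ico n m = u := by
  have hpad : u ∩ range n ∪ Ico n m = u :=
    inter_range_union_Ico hu.1 (Ico_subset_of_mem_layerRes_padFamily (by omega) hu)
  obtain ⟨-, hui, huX⟩ := hu
  have hun : u ∩ range n ⊆ range n := inter_subset_right
  refine ⟨⟨hun, ?_, fun w hw hss => ?_⟩, hpad⟩
  · have := card_union_Ico (m := m) hun
    rw [hpad, hui] at this
    omega
  · refine huX _ (mem_union_left _ (mem_image_of_mem _ hw)) ?_
    rw [← hpad]
    exact (union_Ico_ssubset_union_Ico_iff hun (hX w hw)).2 hss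

theorem image_union_Ico_layerRes (hX : ∀ w ∈ X, w ⊆ range n) (hnm : n ≤ m)
    (hi : n < m → i + 1 < n) :
    (· ∪ Ico n m) '' layerRes n i X = layerRes m (i + (m - n)) (padFamily n m X) := by
  refine subset_antisymm ?_ fun u hu => ?_
  · rintro _ ⟨v, hv, rfl⟩
    exact union_Ico_mem_layerRes_padFamily hX hnm hv
  · obtain ⟨hmem, hpad⟩ := mem_layerRes_of_mem_layerRes_padFamily hX hi hu
    exact ⟨_, hmem, hpad⟩

end Padding

/-- The embedding trick: for `k ≤ ⌊n/2⌋` and `X` above layer `k`, the map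
`w ↦ w⁺ = w ∪ {n, …, 2n−2k−1}` (0-indexed ground sets) induces a size-preserving
bijection between antichains contained in `L^X_{[k−1,k]}(B_n)` and antichains
contained in `L̄^{X'}_{[n−k−1, n−k]}(B_{2n−2k})`. -/
theorem stmt13 (n k : ℕ) (hk1 : 1 ≤ k) (hk : k ≤ n / 2)
    (X : Finset (Finset ℕ)) (hX : ∀ w ∈ X, w ⊆ Finset.range n ∧ k < w.card)
    (X' : Finset (Finset ℕ))
    (hX' : X' = X.image (fun w => w ∪ Finset.Ico n (2 * n - 2 * k)) ∪
      (Finset.Ico n (2 * n - 2 * k)).image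
        (fun j => (Finset.range (2 * n - 2 * k)).erase j)) :
    Set.BijOn
      (fun S : Finset (Finset ℕ) => S.image (fun w => w ∪ Finset.Ico n (2 * n - 2 * k)))
      {S | FinAntichain S ∧
        ∀ v ∈ S, v ∈ layerRes n (k - 1) X ∪ layerRes n k X}
      {S | FinAntichain S ∧
        ∀ v ∈ S, v ∈ layerRes (2 * n - 2 * k) (n - k - 1) X'
          ∪ layerRes (2 * n - 2 * k) (n - k) X'}
    ∧ ∀ S : Finset (Finset ℕ), FinAntichain S →
        (∀ v ∈ S, v ∈ layerRes n (k - 1) X ∪ layerRes n k X) →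
        (S.image (fun w => w ∪ Finset.Ico n (2 * n - 2 * k))).card = S.card := by
  have hXn : ∀ w ∈ X, w ⊆ range n := fun w hw => (hX w hw).1
  set L : Set (Finset ℕ) := layerRes n (k - 1) X ∪ layerRes n k X
  have hg : ∀ u ∈ L, ∀ v ∈ L,
      u ∪ Ico n (2 * n - 2 * k) ⊆ v ∪ Ico n (2 * n - 2 * k) ↔ u ⊆ v := by
    rintro u (hu | hu) v - <;> exact union_Ico_subset_union_Ico_iff hu.1
  have hL : (· ∪ Ico n (2 * n - 2 * k)) '' L =
      layerRes (2 * n - 2 * k) (n - k - 1) X' ∪ layerRes (2 * n - 2 * k) (n - k) X' := by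
    rw [Set.image_union, image_union_Ico_layerRes hXn (by omega) (by omega),
      image_union_Ico_layerRes hXn (by omega) (by omega), hX']
    congr 2 <;> omega
  refine ⟨bijOn_image_finAntichain hg hL, fun S _ hS => card_image_of_injOn ?_⟩
  exact (injOn_of_subset_iff hg).mono fun v hv => hS v hv
end

section
/- Let n be odd and k = (n+1)/2. For every antichain S contained in C_n = L_{k−2} ∪ L_{k−1} ∪ L_k ∪ L_{k+1} of B_n, at least one of the following holds: (i) every 2-linked component A (in the comparability graph induced on L_{k−1} ∪ L_k) of the set N⁺(S ∩ L_{k−2}) ∪ (S ∩ L_{k−1}) satisfies |N⁺(A)| ≥ (1 + 1/n)|A|; or (ii) every 2-linked component A (in the comparability graph induced on L_{k−1} ∪ L_k) of the set N⁻(S ∩ L_{k+1}) ∪ (S ∩ L_k) satisfies |N⁻(A)| ≥ (1 + 1/n)|A|. -/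
open Finset
open scoped Classical

/-- The square of a graph: two distinct vertices are adjacent in `G²` iff their
distance in `G` is at most 2. -/
def graphSquare {V : Type*} (G : SimpleGraph V) : SimpleGraph V where
  Adj u w := u ≠ w ∧ (G.Adj u w ∨ ∃ x, G.Adj u x ∧ G.Adj x w)
  symm := by
    constructor
    intro u w h
    refine ⟨h.1.symm, ?_⟩
    rcases h.2 with h' | ⟨x, hx1, hx2⟩
    · exact Or.inl h'.symm
    · exact Or.inr ⟨x, hx2.symm, hx1.symm⟩
  loopless := ⟨fun u h => h.1 rfl⟩

/-- A finite vertex set `U` is 2-linked in `G` if `G²[U]` is connected. -/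
def TwoLinked {V : Type*} (G : SimpleGraph V) (U : Finset V) : Prop :=
  ((graphSquare G).induce (U : Set V)).Connected

/-- `A` is a 2-linked component of `T` in `G`: a maximal 2-linked subset of `T`. -/
def IsTwoLinkedComponent {V : Type*} (G : SimpleGraph V) (T A : Finset V) : Prop :=
  A ⊆ T ∧ TwoLinked G A ∧ ∀ A' : Finset V, A ⊂ A' → A' ⊆ T → ¬ TwoLinked G A'

/-- The comparability graph of `B_n` induced on the layers `L_{k−1} ∪ L_k`. -/
def compGraph (n k : ℕ) : SimpleGraph (Finset (Fin n)) where
  Adj u v := (u.card = k - 1 ∧ v.card = k ∧ u ⊂ v) ∨ (v.card = k - 1 ∧ u.card = k ∧ v ⊂ u)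
  symm := by constructor; intro u v h; tauto
  loopless := by
    constructor
    intro u h
    rcases h with ⟨-, -, h⟩ | ⟨-, -, h⟩ <;> exact (ssubset_irrefl u) h

/-- Up-neighbours in layer `j`: elements of `L_j` strictly containing an element of `T`. -/
noncomputable def upNbrs (n j : ℕ) (T : Finset (Finset (Fin n))) :
    Finset (Finset (Fin n)) :=
  univ.filter (fun x => x.card = j ∧ ∃ v ∈ T, v ⊂ x)

/-- Down-neighbours in layer `j`: elements of `L_j` strictly contained in an element of `T`. -/
noncomputable def downNbrs (n j : ℕ) (T : Finset (Finset (Fin n))) :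
    Finset (Finset (Fin n)) :=
  univ.filter (fun x => x.card = j ∧ ∃ v ∈ T, x ⊂ v)

/-!
The antichain condition makes `N⁺(T⁺)` and `T⁻` disjoint subsets of the middle layer `L_k`, where
`T⁺ = N⁺(S ∩ L_{k−2}) ∪ (S ∩ L_{k−1})` and `T⁻ = N⁻(S ∩ L_{k+1}) ∪ (S ∩ L_k)`. Since `n = 2k − 1`,
local LYM gives `|T⁺| ≤ |N⁺(T⁺)|`, so one of `T⁺`, `T⁻` (and then each of its components) fills at
most half of its layer. It remains to show that a family `𝒜` of `k`-sets with `2|𝒜| ≤ C(2k−1, k)`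
has `|∂𝒜| ≥ (1 + 1/n)|𝒜|`; the upward statement follows by complementation. If
`|𝒜| ≥ C(2k−2, k)`, the Lovász form of Kruskal–Katona gives `|∂𝒜| ≥ C(2k−2, k−1)`, which is enough
because `C(2k−1, k) = C(2k−2, k) + C(2k−2, k−1)`. Otherwise the colex initial segment of size `|𝒜|`
avoids the largest element, so local LYM inside a ground set of size `2k − 2` gives it a shadow of
size at least `k/(k−1)` times its own; Kruskal–Katona transfers this to `𝒜`.
-/

open scoped FinsetFamily

namespace Finset

theorem card_mul_le_card_shadow_mul_of_forall_subset {α : Type*} [DecidableEq α]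
    {𝒜 : Finset (Finset α)} {r : ℕ} {G : Finset α}
    (h𝒜 : (𝒜 : Set (Finset α)).Sized r) (hG : ∀ s ∈ 𝒜, s ⊆ G) :
    #𝒜 * r ≤ #(∂ 𝒜) * (#G - r + 1) := by
  refine card_mul_le_card_mul' (· ⊆ ·) (fun s hs => ?_) (fun t ht => ?_)
  · rw [← h𝒜 hs, ← card_image_of_injOn s.erase_injOn]
    refine card_le_card ?_
    simp_rw [image_subset_iff, mem_bipartiteBelow]
    exact fun a ha => ⟨erase_mem_shadow hs ha, erase_subset _ _⟩
  obtain ⟨s, hs, hts, hcard⟩ := mem_shadow_iff_exists_mem_card_add_one.1 ht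
  have hsupersets : bipartiteAbove (· ⊆ ·) 𝒜 t ⊆ (G \ t).image (insert · t) := by
    intro u hu
    rw [mem_bipartiteAbove] at hu
    obtain ⟨a, ha, rfl⟩ := exists_eq_insert_iff.2 ⟨hu.2, by rw [h𝒜 hu.1, ← h𝒜 hs, hcard]⟩
    exact mem_image_of_mem _ (mem_sdiff.2 ⟨hG _ hu.1 (mem_insert_self a t), ha⟩)
  calc #(bipartiteAbove (· ⊆ ·) 𝒜 t) ≤ #((G \ t).image (insert · t)) := card_le_card hsupersets
    _ ≤ #(G \ t) := card_image_le
    _ = #G - #t := card_sdiff_of_subset (hts.trans (hG s hs))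
    _ = #G - r + 1 := by
      have := card_le_card (hG s hs)
      have := h𝒜 hs
      omega

end Finset

namespace Finset.Colex

variable {α : Type*} [LinearOrder α] [Fintype α]

theorem exists_isInitSeg_card {r m : ℕ} (hm : m ≤ #(powersetCard r (univ : Finset α))) :
    ∃ 𝒞 : Finset (Finset α), IsInitSeg 𝒞 r ∧ #𝒞 = m := by
  induction m with
  | zero => exact ⟨∅, isInitSeg_empty, card_empty⟩
  | succ m ih =>
    obtain ⟨𝒞, h𝒞, rfl⟩ := ih (by omega)
    obtain ⟨s, hs, hmin⟩ := exists_min_image (powersetCard r univ \ 𝒞) toColex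
      (sdiff_nonempty.2 fun h => by have := card_le_card h; omega)
    rw [mem_sdiff, mem_powersetCard] at hs
    refine ⟨insert s 𝒞, ⟨?_, ?_⟩, card_insert_of_notMem hs.2⟩
    · intro t ht
      rcases mem_insert.1 ht with rfl | ht
      exacts [hs.1.2, h𝒞.1 ht]
    · rintro t u ht ⟨hut, hu⟩
      rw [mem_insert] at ht ⊢
      rcases ht with rfl | ht
      · by_contra! hu'
        exact (hmin u (mem_sdiff.2 ⟨mem_powersetCard.2 ⟨subset_univ _, hu⟩, hu'.2⟩)).not_gt hut
      · exact Or.inr (h𝒞.2 ht ⟨hut, hu⟩)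

theorem IsInitSeg.notMem_of_card_lt {𝒞 : Finset (Finset α)} {r : ℕ} {a : α}
    (h𝒞 : IsInitSeg 𝒞 r) (ha : ∀ b, b ≤ a) (hcard : #𝒞 < #(powersetCard r (univ.erase a)))
    {s : Finset α} (hs : s ∈ 𝒞) : a ∉ s := by
  intro has
  refine hcard.not_ge (card_le_card fun t ht => h𝒞.2 hs ⟨?_, (mem_powersetCard.1 ht).2⟩)
  have hat : a ∉ t := fun h => by simpa using (mem_powersetCard.1 ht).1 h
  exact toColex_lt_toColex_iff_exists_forall_lt.2
    ⟨a, has, hat, fun b hb _ => (ha b).lt_of_ne (ne_of_mem_of_not_mem hb hat)⟩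

end Finset.Colex

namespace Finset

theorem add_one_mul_card_le_mul_card_shadow {n k : ℕ} (hnk : n + 1 = 2 * k)
    {𝒜 : Finset (Finset (Fin n))} (h𝒜 : (𝒜 : Set (Finset (Fin n))).Sized k)
    (hhalf : 2 * #𝒜 ≤ n.choose k) : (n + 1) * #𝒜 ≤ n * #(∂ 𝒜) := by
  obtain ⟨j, rfl⟩ : ∃ j, k = j + 1 := ⟨k - 1, by omega⟩
  obtain rfl : n = 2 * j + 1 := by omega
  obtain rfl | hj := Nat.eq_zero_or_pos j
  · have : #𝒜 = 0 := by simp at hhalf; omega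
    simp [this]
  have hpascal : (2 * j + 1).choose (j + 1) = (2 * j).choose j + (2 * j).choose (j + 1) :=
    Nat.choose_succ_succ _ _
  have hsymm : (2 * j).choose (j + 1) * (j + 1) = (2 * j).choose j * j := by
    simpa [two_mul] using Nat.choose_succ_right_eq (2 * j) j
  by_cases hsmall : #𝒜 < (2 * j).choose (j + 1)
  · obtain ⟨𝒞, h𝒞, h𝒞𝒜⟩ := Colex.exists_isInitSeg_card (α := Fin (2 * j + 1)) (r := j + 1)
      (m := #𝒜) (by rw [card_powersetCard, card_univ, Fintype.card_fin]; omega)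
    have hKK : #(∂ 𝒞) ≤ #(∂ 𝒜) := kruskal_katona h𝒜 h𝒞𝒜.le h𝒞
    have htop : ∀ s ∈ 𝒞, Fin.last (2 * j) ∉ s := fun s hs =>
      h𝒞.notMem_of_card_lt Fin.le_last (by
        rwa [card_powersetCard, card_erase_of_mem (mem_univ _), card_univ, Fintype.card_fin,
          h𝒞𝒜]) hs
    have hG : ∀ s ∈ 𝒞, s ⊆ univ.erase (Fin.last (2 * j)) := fun s hs x hx =>
      mem_erase.2 ⟨ne_of_mem_of_not_mem hx (htop s hs), mem_univ _⟩
    have hLYM := card_mul_le_card_shadow_mul_of_forall_subset h𝒞.1 hG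
    rw [card_erase_of_mem (mem_univ _), card_univ, Fintype.card_fin,
      show 2 * j + 1 - 1 - (j + 1) + 1 = j by omega] at hLYM
    calc (2 * j + 1 + 1) * #𝒜 = 2 * (#𝒞 * (j + 1)) := by rw [h𝒞𝒜]; ring
      _ ≤ 2 * (#(∂ 𝒞) * j) := by gcongr
      _ ≤ (2 * j + 1) * #(∂ 𝒞) := by nlinarith
      _ ≤ (2 * j + 1) * #(∂ 𝒜) := by gcongr
  · have hLovasz := kruskal_katona_lovasz_form (i := 1) (by omega) (by omega) (by omega) h𝒜
      (not_lt.1 hsmall)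
    simp only [Function.iterate_one, Nat.add_sub_cancel] at hLovasz
    calc (2 * j + 1 + 1) * #𝒜 = (j + 1) * (2 * #𝒜) := by ring
      _ ≤ (j + 1) * ((2 * j).choose j + (2 * j).choose (j + 1)) := by rw [← hpascal]; gcongr
      _ = (2 * j + 1) * (2 * j).choose j := by
        rw [mul_add, mul_comm (j + 1) ((2 * j).choose (j + 1)), hsymm]; ring
      _ ≤ (2 * j + 1) * #(∂ 𝒜) := by gcongr

theorem add_one_mul_card_le_mul_card_upShadow {n k : ℕ} (hnk : n + 1 = 2 * k)
    {𝒜 : Finset (Finset (Fin n))} (h𝒜 : (𝒜 : Set (Finset (Fin n))).Sized (k - 1))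
    (hhalf : 2 * #𝒜 ≤ n.choose k) : (n + 1) * #𝒜 ≤ n * #(∂⁺ 𝒜) := by
  have hcompl : (𝒜ᶜˢ : Set (Finset (Fin n))).Sized k := by
    simpa [show n - (k - 1) = k by omega] using h𝒜.compls
  simpa using add_one_mul_card_le_mul_card_shadow hnk hcompl (by rwa [card_compls])

theorem card_le_card_upShadow {n k : ℕ} (hnk : n + 1 = 2 * k)
    {𝒜 : Finset (Finset (Fin n))} (h𝒜 : (𝒜 : Set (Finset (Fin n))).Sized (k - 1)) :
    #𝒜 ≤ #(∂⁺ 𝒜) := by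
  have hcompl : (𝒜ᶜˢ : Set (Finset (Fin n))).Sized k := by
    simpa [show n - (k - 1) = k by omega] using h𝒜.compls
  have hLYM := card_mul_le_card_shadow_mul hcompl
  rw [Fintype.card_fin, show n - k + 1 = k by omega, card_compls, shadow_compls,
    card_compls] at hLYM
  exact Nat.le_of_mul_le_mul_right hLYM (by omega)

end Finset

section Layers

variable {n j : ℕ} {T : Finset (Finset (Fin n))} {x : Finset (Fin n)}

theorem mem_upNbrs : x ∈ upNbrs n j T ↔ #x = j ∧ ∃ v ∈ T, v ⊂ x := by
  simp [upNbrs]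

theorem mem_downNbrs : x ∈ downNbrs n j T ↔ #x = j ∧ ∃ v ∈ T, x ⊂ v := by
  simp [downNbrs]

theorem upNbrs_eq_upShadow (hT : ∀ s ∈ T, #s + 1 = j) : upNbrs n j T = ∂⁺ T := by
  ext x
  rw [mem_upNbrs, mem_upShadow_iff_exists_mem_card_add_one]
  constructor
  · rintro ⟨hx, v, hv, hvx⟩
    exact ⟨v, hv, hvx.subset, by rw [hx, hT v hv]⟩
  · rintro ⟨v, hv, hvx, hx⟩
    exact ⟨by rw [hx, hT v hv], v, hv, hvx.ssubset_of_ne (by rintro rfl; omega)⟩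

theorem downNbrs_eq_shadow (hT : ∀ s ∈ T, #s = j + 1) : downNbrs n j T = ∂ T := by
  ext x
  rw [mem_downNbrs, mem_shadow_iff_exists_mem_card_add_one]
  constructor
  · rintro ⟨hx, v, hv, hxv⟩
    exact ⟨v, hv, hxv.subset, by rw [hx, hT v hv]⟩
  · rintro ⟨v, hv, hxv, hx⟩
    exact ⟨by rw [hT v hv] at hx; omega, v, hv,
      hxv.ssubset_of_ne (by rintro rfl; omega)⟩

end Layers

section Antichain

variable {n j : ℕ} {S T U : Finset (Finset (Fin n))} {v : Finset (Fin n)}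

theorem exists_subset_of_mem_upNbrs_union (hT : T ⊆ S) (hU : U ⊆ S)
    (hv : v ∈ upNbrs n j T ∪ U) : ∃ u ∈ S, u ⊆ v := by
  rcases mem_union.1 hv with hv | hv
  · obtain ⟨-, u, hu, huv⟩ := mem_upNbrs.1 hv
    exact ⟨u, hT hu, huv.subset⟩
  · exact ⟨v, hU hv, subset_rfl⟩

theorem exists_superset_of_mem_downNbrs_union (hT : T ⊆ S) (hU : U ⊆ S)
    (hv : v ∈ downNbrs n j T ∪ U) : ∃ u ∈ S, v ⊆ u := by
  rcases mem_union.1 hv with hv | hv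
  · obtain ⟨-, u, hu, hvu⟩ := mem_downNbrs.1 hv
    exact ⟨u, hT hu, hvu.subset⟩
  · exact ⟨v, hU hv, subset_rfl⟩

theorem disjoint_upNbrs_of_isAntichain (hS : IsAntichain (· ⊆ ·) (S : Set (Finset (Fin n))))
    (hT : ∀ v ∈ T, ∃ u ∈ S, u ⊆ v) (hU : ∀ x ∈ U, ∃ u ∈ S, x ⊆ u) :
    Disjoint (upNbrs n j T) U := by
  refine disjoint_left.2 fun x hxT hxU => ?_
  obtain ⟨-, v, hv, hvx⟩ := mem_upNbrs.1 hxT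
  obtain ⟨u, hu, huv⟩ := hT v hv
  obtain ⟨w, hw, hxw⟩ := hU x hxU
  have huw : u ⊂ w := (huv.trans_ssubset hvx).trans_subset hxw
  exact hS hu hw huw.ne huw.subset

end Antichain

theorem two_mul_card_le_choose_or {n k : ℕ} (hnk : n + 1 = 2 * k) {P M : Finset (Finset (Fin n))}
    (hP : (P : Set (Finset (Fin n))).Sized (k - 1)) (hM : (M : Set (Finset (Fin n))).Sized k)
    (hPM : Disjoint (∂⁺ P) M) : 2 * #P ≤ n.choose k ∨ 2 * #M ≤ n.choose k := by
  have hup : #P ≤ #(∂⁺ P) := card_le_card_upShadow hnk hP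
  have hlayer : ∂⁺ P ∪ M ⊆ powersetCard k univ := fun x hx => by
    rw [mem_powersetCard]
    refine ⟨subset_univ x, (mem_union.1 hx).elim (fun hx => ?_) (fun hx => hM hx)⟩
    rw [hP.upShadow hx]
    omega
  have := card_le_card hlayer
  rw [card_union_of_disjoint hPM, card_powersetCard, card_univ, Fintype.card_fin] at this
  omega

theorem one_add_one_div_mul_le_of_add_one_mul_le {n a b : ℕ} (hn : 0 < n)
    (h : (n + 1) * a ≤ n * b) : (1 + 1 / (n : ℝ)) * a ≤ b := by
  have hR : ((n : ℝ) + 1) * a ≤ n * b := by exact_mod_cast h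
  have hn' : (0 : ℝ) < n := by exact_mod_cast hn
  rw [one_add_div hn'.ne', div_mul_eq_mul_div, div_le_iff₀ hn']
  linarith

theorem one_add_one_div_mul_card_le_card_upNbrs {n k : ℕ} (hnk : n + 1 = 2 * k)
    {T A : Finset (Finset (Fin n))} (hT : (T : Set (Finset (Fin n))).Sized (k - 1))
    (hhalf : 2 * #T ≤ n.choose k) (hA : A ⊆ T) :
    (1 + 1 / (n : ℝ)) * #A ≤ #(upNbrs n k A) := by
  have hAk : (A : Set (Finset (Fin n))).Sized (k - 1) := hT.mono hA
  rw [upNbrs_eq_upShadow fun s hs => by rw [hAk hs]; omega]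
  exact one_add_one_div_mul_le_of_add_one_mul_le (by omega)
    (add_one_mul_card_le_mul_card_upShadow hnk hAk (by have := card_le_card hA; omega))

theorem one_add_one_div_mul_card_le_card_downNbrs {n k : ℕ} (hnk : n + 1 = 2 * k)
    {T A : Finset (Finset (Fin n))} (hT : (T : Set (Finset (Fin n))).Sized k)
    (hhalf : 2 * #T ≤ n.choose k) (hA : A ⊆ T) :
    (1 + 1 / (n : ℝ)) * #A ≤ #(downNbrs n (k - 1) A) := by
  have hAk : (A : Set (Finset (Fin n))).Sized k := hT.mono hA
  rw [downNbrs_eq_shadow fun s hs => by rw [hAk hs]; omega]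
  exact one_add_one_div_mul_le_of_add_one_mul_le (by omega)
    (add_one_mul_card_le_mul_card_shadow hnk hAk (by have := card_le_card hA; omega))

theorem stmt14_general (n k : ℕ) (hn : Odd n) (hk : k = (n + 1) / 2)
    (S : Finset (Finset (Fin n)))
    (hanti : ∀ u ∈ S, ∀ v ∈ S, u ≠ v → ¬ u ⊆ v) :
    (∀ A : Finset (Finset (Fin n)),
        IsTwoLinkedComponent (compGraph n k)
          (upNbrs n (k - 1) (S.filter (fun v => v.card = k - 2)) ∪
            S.filter (fun v => v.card = k - 1)) A →
        (1 + 1 / (n : ℝ)) * A.card ≤ ((upNbrs n k A).card : ℝ))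
    ∨ (∀ A : Finset (Finset (Fin n)),
        IsTwoLinkedComponent (compGraph n k)
          (downNbrs n k (S.filter (fun v => v.card = k + 1)) ∪
            S.filter (fun v => v.card = k)) A →
        (1 + 1 / (n : ℝ)) * A.card ≤ ((downNbrs n (k - 1) A).card : ℝ)) := by
  have hnk : n + 1 = 2 * k := by obtain ⟨m, rfl⟩ := hn; omega
  set Tup := upNbrs n (k - 1) (S.filter (fun v => v.card = k - 2)) ∪
    S.filter (fun v => v.card = k - 1)
  set Tdown := downNbrs n k (S.filter (fun v => v.card = k + 1)) ∪ S.filter (fun v => v.card = k)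
  have hTup : (Tup : Set (Finset (Fin n))).Sized (k - 1) := fun x hx =>
    (mem_union.1 hx).elim (fun hx => (mem_upNbrs.1 hx).1) (fun hx => (mem_filter.1 hx).2)
  have hTdown : (Tdown : Set (Finset (Fin n))).Sized k := fun x hx =>
    (mem_union.1 hx).elim (fun hx => (mem_downNbrs.1 hx).1) (fun hx => (mem_filter.1 hx).2)
  have hdisj : Disjoint (∂⁺ Tup) Tdown := by
    rw [← upNbrs_eq_upShadow (j := k) fun s hs => by rw [hTup hs]; omega]
    exact disjoint_upNbrs_of_isAntichain hanti
      (fun v hv => exists_subset_of_mem_upNbrs_union (filter_subset _ _) (filter_subset _ _) hv)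
      (fun x hx => exists_superset_of_mem_downNbrs_union (filter_subset _ _) (filter_subset _ _) hx)
  rcases two_mul_card_le_choose_or hnk hTup hTdown hdisj with hhalf | hhalf
  · exact Or.inl fun A hA => one_add_one_div_mul_card_le_card_upNbrs hnk hTup hhalf hA.1
  · exact Or.inr fun A hA => one_add_one_div_mul_card_le_card_downNbrs hnk hTdown hhalf hA.1

/-- For `n` odd, `k = (n+1)/2`, and every antichain `S ⊆ L_{k−2} ∪ L_{k−1} ∪ L_k ∪ L_{k+1}`:
either every 2-linked component `A` of `N⁺(S ∩ L_{k−2}) ∪ (S ∩ L_{k−1})` satisfies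
`|N⁺(A)| ≥ (1 + 1/n)|A|`, or every 2-linked component `A` of
`N⁻(S ∩ L_{k+1}) ∪ (S ∩ L_k)` satisfies `|N⁻(A)| ≥ (1 + 1/n)|A|`. -/
theorem stmt14 (n k : ℕ) (hn : Odd n) (hn5 : 5 ≤ n) (hk : k = (n + 1) / 2)
    (S : Finset (Finset (Fin n)))
    (hanti : ∀ u ∈ S, ∀ v ∈ S, u ≠ v → ¬ u ⊆ v)
    (hS : ∀ v ∈ S, v.card = k - 2 ∨ v.card = k - 1 ∨ v.card = k ∨ v.card = k + 1) :
    (∀ A : Finset (Finset (Fin n)),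
        IsTwoLinkedComponent (compGraph n k)
          (upNbrs n (k - 1) (S.filter (fun v => v.card = k - 2)) ∪
            S.filter (fun v => v.card = k - 1)) A →
        (1 + 1 / (n : ℝ)) * A.card ≤ ((upNbrs n k A).card : ℝ))
    ∨ (∀ A : Finset (Finset (Fin n)),
        IsTwoLinkedComponent (compGraph n k)
          (downNbrs n k (S.filter (fun v => v.card = k + 1)) ∪
            S.filter (fun v => v.card = k)) A →
        (1 + 1 / (n : ℝ)) * A.card ≤ ((downNbrs n (k - 1) A).card : ℝ)) :=
  stmt14_general n k hn hk S hanti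
end
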